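/- arXiv:1705.00506 — 7 statements merged into one kernel-verified Lean document; each statement's English description precedes it below -/
import Mathlib

section
/- Under consistency, positivity, unconfoundedness of the instrument, the exclusion restriction, and monotonicity, the difference in mean outcomes by instrument value satisfies E(Y | Z=1) - E(Y | Z=0) = E(Y_{a=1} - Y_{a=0} | A_{z=1} > A_{z=0}) * P(A_{z=1} > A_{z=0}). -/
open MeasureTheory ProbabilityTheory
open scoped ENNReal

/-- Conditional expectation of `f` given the event `s`: `E(f | s)`. -/
noncomputable def cexp {Ω : Type*} [MeasurableSpace Ω] (μ : Measure Ω) (f : Ω → ℝ) (s : Set Ω) : ℝ :=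
  (∫ ω in s, f ω ∂μ) / (μ s).toReal

/-!
Consistency turns `E(Y | Z = z)` into `E(Y_z | Z = z)`, and since `Z` is independent of `Y_z`
this is the unconditional mean `E(Y_z)`. By the exclusion restriction `Y_z = Y_{A_z}`, so
`Y_{z=1} - Y_{z=0}` vanishes wherever `A_{z=0} = A_{z=1}`; with binary treatment and
monotonicity the only other case is the compliers `A_{z=0} = 0 < 1 = A_{z=1}`, where it equals
`Y_{a=1} - Y_{a=0}`. Hence the difference of means is `E(1{compliers} (Y_{a=1} - Y_{a=0}))`.
-/

section CondMean

variable {Ω : Type*} [MeasurableSpace Ω] {μ : Measure Ω}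

theorem cexp_congr {f g : Ω → ℝ} {s : Set Ω} (hs : MeasurableSet s) (h : Set.EqOn f g s) :
    cexp μ f s = cexp μ g s := by
  rw [cexp, cexp, setIntegral_congr_fun hs h]

theorem cexp_mul_toReal [IsFiniteMeasure μ] (f : Ω → ℝ) (s : Set Ω) :
    cexp μ f s * (μ s).toReal = ∫ ω in s, f ω ∂μ := by
  by_cases hs : μ s = 0
  · simp [cexp, hs, Measure.restrict_eq_zero.mpr hs]
  · exact div_mul_cancel₀ _ (ENNReal.toReal_ne_zero.mpr ⟨hs, measure_ne_top μ s⟩)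

theorem ProbabilityTheory.IndepFun.setIntegral_preimage_eq_measureReal_mul_integral
    {β : Type*} [MeasurableSpace β] {Z : Ω → β} {W : Ω → ℝ} (hZW : IndepFun Z W μ)
    (hZ : Measurable Z) {t : Set β} (ht : MeasurableSet t) (hW : AEStronglyMeasurable W μ) :
    ∫ ω in Z ⁻¹' t, W ω ∂μ = μ.real (Z ⁻¹' t) * ∫ ω, W ω ∂μ := by
  have hind : IndepFun ((Z ⁻¹' t).indicator (1 : Ω → ℝ)) W μ :=
    hZW.comp (measurable_const.indicator ht) measurable_id
  have hpre : (Z ⁻¹' t).indicator W = (Z ⁻¹' t).indicator 1 * W := by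
    ext ω
    by_cases hω : Z ω ∈ t <;> simp [Set.indicator, hω]
  rw [← integral_indicator (hZ ht), hpre,
    hind.integral_mul_eq_mul_integral
      (measurable_const.indicator (hZ ht)).aestronglyMeasurable hW,
    integral_indicator_one (hZ ht)]

theorem ProbabilityTheory.IndepFun.cexp_preimage_eq_integral [IsFiniteMeasure μ]
    {β : Type*} [MeasurableSpace β] {Z : Ω → β} {W : Ω → ℝ} (hZW : IndepFun Z W μ) (hZ : Measurable Z) {t : Set β}
    (ht : MeasurableSet t) (hpos : μ (Z ⁻¹' t) ≠ 0) (hW : AEStronglyMeasurable W μ) :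
    cexp μ W (Z ⁻¹' t) = ∫ ω, W ω ∂μ := by
  rw [cexp, hZW.setIntegral_preimage_eq_measureReal_mul_integral hZ ht hW]
  exact mul_div_cancel_left₀ _ (ENNReal.toReal_ne_zero.mpr ⟨hpos, measure_ne_top μ _⟩)

end CondMean

theorem ite_eq_one_sub_ite_eq_one_of_le {a₀ a₁ : ℝ} (h₀ : a₀ = 0 ∨ a₀ = 1)
    (h₁ : a₁ = 0 ∨ a₁ = 1) (hle : a₀ ≤ a₁) (y₀ y₁ : ℝ) :
    ((if a₁ = 1 then y₁ else y₀) - if a₀ = 1 then y₁ else y₀) =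
      if a₀ < a₁ then y₁ - y₀ else 0 := by
  rcases h₀ with rfl | rfl <;> rcases h₁ with rfl | rfl <;> norm_num at *

theorem stmt0_general {Ω : Type*} [MeasurableSpace Ω] (μ : Measure Ω) [IsProbabilityMeasure μ]
    (Z A A0 A1 Y Y0 Y1 Yz0 Yz1 : Ω → ℝ)
    (hZm : Measurable Z) (hA0m : Measurable A0) (hA1m : Measurable A1)
    (hZbin : ∀ ω, Z ω = 0 ∨ Z ω = 1)
    (hA0bin : ∀ ω, A0 ω = 0 ∨ A0 ω = 1)
    (hA1bin : ∀ ω, A1 ω = 0 ∨ A1 ω = 1)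
    -- consistency: A = A_z and Y = Y_z on {Z = z}
    (hcons1 : ∀ ω, Z ω = 1 → A ω = A1 ω ∧ Y ω = Yz1 ω)
    (hcons0 : ∀ ω, Z ω = 0 → A ω = A0 ω ∧ Y ω = Yz0 ω)
    -- exclusion restriction: Y_z = Y_{A_z}, i.e. Y_{za} = Y_a
    (hexcl1 : ∀ ω, Yz1 ω = if A1 ω = 1 then Y1 ω else Y0 ω)
    (hexcl0 : ∀ ω, Yz0 ω = if A0 ω = 1 then Y1 ω else Y0 ω)
    -- positivity
    (hpos : 0 < μ {ω | Z ω = 1}) (hpos' : μ {ω | Z ω = 1} < 1)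
    -- unconfoundedness of the instrument
    (hindep : IndepFun Z (fun ω => (A0 ω, A1 ω, Yz0 ω, Yz1 ω)) μ)
    -- monotonicity
    (hmono : ∀ᵐ ω ∂μ, A0 ω ≤ A1 ω)
    -- integrability
    (hYz0int : Integrable Yz0 μ) (hYz1int : Integrable Yz1 μ) :
    cexp μ Y {ω | Z ω = 1} - cexp μ Y {ω | Z ω = 0} =
      cexp μ (fun ω => Y1 ω - Y0 ω) {ω | A0 ω < A1 ω} * (μ {ω | A0 ω < A1 ω}).toReal := by
  have hZ0 : {ω | Z ω = 0} = {ω | Z ω = 1}ᶜ := by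
    ext ω; rcases hZbin ω with h | h <;> simp [h]
  have hpos0 : μ {ω | Z ω = 0} ≠ 0 := by
    rw [hZ0, prob_compl_eq_one_sub (s := {ω | Z ω = 1}) (hZm (measurableSet_singleton 1))]
    exact (tsub_pos_of_lt hpos').ne'
  have hindep1 : IndepFun Z Yz1 μ :=
    hindep.comp (φ := id) (ψ := fun p : ℝ × ℝ × ℝ × ℝ => p.2.2.2) measurable_id (by fun_prop)
  have hindep0 : IndepFun Z Yz0 μ :=
    hindep.comp (φ := id) (ψ := fun p : ℝ × ℝ × ℝ × ℝ => p.2.2.1) measurable_id (by fun_prop)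
  have hmean1 : cexp μ Y {ω | Z ω = 1} = ∫ ω, Yz1 ω ∂μ :=
    (cexp_congr (hZm (measurableSet_singleton 1)) fun ω h => (hcons1 ω h).2).trans <|
      hindep1.cexp_preimage_eq_integral hZm (measurableSet_singleton 1) hpos.ne'
        hYz1int.aestronglyMeasurable
  have hmean0 : cexp μ Y {ω | Z ω = 0} = ∫ ω, Yz0 ω ∂μ :=
    (cexp_congr (hZm (measurableSet_singleton 0)) fun ω h => (hcons0 ω h).2).trans <|
      hindep0.cexp_preimage_eq_integral hZm (measurableSet_singleton 0) hpos0
        hYz0int.aestronglyMeasurable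
  have hcompliers : (fun ω => Yz1 ω - Yz0 ω)
      =ᵐ[μ] {ω | A0 ω < A1 ω}.indicator fun ω => Y1 ω - Y0 ω := by
    filter_upwards [hmono] with ω hω
    rw [hexcl1, hexcl0, ite_eq_one_sub_ite_eq_one_of_le (hA0bin ω) (hA1bin ω) hω]
    rfl
  rw [hmean1, hmean0, ← integral_sub hYz1int hYz0int, integral_congr_ae hcompliers,
    integral_indicator (measurableSet_lt hA0m hA1m), cexp_mul_toReal]

/-- Under consistency, positivity, unconfoundedness of the instrument, the exclusion
restriction, and monotonicity:
`E(Y | Z=1) - E(Y | Z=0) = E(Y₁ - Y₀ | A_{z=1} > A_{z=0}) * P(A_{z=1} > A_{z=0})`. -/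
theorem stmt0 {Ω : Type*} [MeasurableSpace Ω] (μ : Measure Ω) [IsProbabilityMeasure μ]
    (Z A A0 A1 Y Y0 Y1 Yz0 Yz1 : Ω → ℝ)
    (hZm : Measurable Z) (hAm : Measurable A) (hA0m : Measurable A0) (hA1m : Measurable A1)
    (hYm : Measurable Y) (hY0m : Measurable Y0) (hY1m : Measurable Y1)
    (hYz0m : Measurable Yz0) (hYz1m : Measurable Yz1)
    (hZbin : ∀ ω, Z ω = 0 ∨ Z ω = 1)
    (hAbin : ∀ ω, A ω = 0 ∨ A ω = 1)
    (hA0bin : ∀ ω, A0 ω = 0 ∨ A0 ω = 1)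
    (hA1bin : ∀ ω, A1 ω = 0 ∨ A1 ω = 1)
    -- consistency: A = A_z and Y = Y_z on {Z = z}
    (hcons1 : ∀ ω, Z ω = 1 → A ω = A1 ω ∧ Y ω = Yz1 ω)
    (hcons0 : ∀ ω, Z ω = 0 → A ω = A0 ω ∧ Y ω = Yz0 ω)
    -- exclusion restriction: Y_z = Y_{A_z}, i.e. Y_{za} = Y_a
    (hexcl1 : ∀ ω, Yz1 ω = if A1 ω = 1 then Y1 ω else Y0 ω)
    (hexcl0 : ∀ ω, Yz0 ω = if A0 ω = 1 then Y1 ω else Y0 ω)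
    -- positivity
    (hpos : 0 < μ {ω | Z ω = 1}) (hpos' : μ {ω | Z ω = 1} < 1)
    -- unconfoundedness of the instrument
    (hindep : IndepFun Z (fun ω => (A0 ω, A1 ω, Yz0 ω, Yz1 ω)) μ)
    -- monotonicity
    (hmono : ∀ᵐ ω ∂μ, A0 ω ≤ A1 ω)
    -- integrability
    (hYint : Integrable Y μ) (hY0int : Integrable Y0 μ) (hY1int : Integrable Y1 μ)
    (hYz0int : Integrable Yz0 μ) (hYz1int : Integrable Yz1 μ) :
    cexp μ Y {ω | Z ω = 1} - cexp μ Y {ω | Z ω = 0} =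
      cexp μ (fun ω => Y1 ω - Y0 ω) {ω | A0 ω < A1 ω} * (μ {ω | A0 ω < A1 ω}).toReal :=
  stmt0_general μ Z A A0 A1 Y Y0 Y1 Yz0 Yz1 hZm hA0m hA1m hZbin hA0bin hA1bin hcons1 hcons0 hexcl1
    hexcl0 hpos hpos' hindep hmono hYz0int hYz1int
end

section
/- Let D be a square-integrable random variable with E[D] = 0, and let R be a binary indicator independent of the pair (A, Y) and of D with P(R=1) = p ∈ (0,1]. Define D* = (R/p)(D − E[D | A,Y]) + E[D | A,Y]. Then Var(D*) = Var(D)/p − ((1−p)/p) · Var(E[D | A,Y]). -/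
open MeasureTheory ProbabilityTheory
open scoped ENNReal

/-- The σ-algebra generated by the pair `(A, Y)`. -/
def sigmaAY {Ω : Type*} (A Y : Ω → ℝ) : MeasurableSpace Ω :=
  MeasurableSpace.comap (fun ω => (A ω, Y ω)) inferInstance

/-!
With `M = E[D | A, Y]`, `ε = D - M` and `W = R / p` we have `D* = W ε + M`, where `W` has mean `1`
and is independent of `(ε, M)`. Expanding the square, `Var(D*)` exceeds `Var(ε + M) = Var(D)` by
`(E[W²] - 1) E[ε²] = Var(W) E[ε²]`. Here `Var(W) = (1 - p) / p` since `R` is Bernoulli(`p`), and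
`E[ε²] = Var(D) - Var(M)` by the law of total variance.
-/

namespace ProbabilityTheory

variable {Ω : Type*} {mΩ : MeasurableSpace Ω} {μ : Measure Ω}

lemma IndepFun.of_measurable_comap_right {β γ δ : Type*} [mβ : MeasurableSpace β]
    [mγ : MeasurableSpace γ] [MeasurableSpace δ] {f : Ω → β} {g : Ω → γ} {h : Ω → δ}
    (hfg : IndepFun f g μ) (hh : Measurable[mγ.comap g] h) : IndepFun f h μ := by
  rw [IndepFun_iff_Indep] at hfg ⊢
  exact indep_of_indep_of_le_right hfg hh.comap_le

lemma IndepFun.sub_condExp_prodMk_condExp {A Y D R : Ω → ℝ}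
    (hindep : IndepFun R (fun ω => (A ω, Y ω, D ω)) μ) :
    IndepFun R (fun ω => (D ω - μ[D | sigmaAY A Y] ω, μ[D | sigmaAY A Y] ω)) μ := by
  let mAYD : MeasurableSpace Ω := MeasurableSpace.comap (fun ω => (A ω, Y ω, D ω)) inferInstance
  have hAY : Measurable[mAYD] (fun ω => (A ω, Y ω)) :=
    (measurable_fst.prodMk (measurable_fst.comp measurable_snd)).comp (comap_measurable _)
  have hM : Measurable[mAYD] (μ[D | sigmaAY A Y]) :=
    stronglyMeasurable_condExp.measurable.mono hAY.comap_le le_rfl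
  have hD : Measurable[mAYD] D := (measurable_snd.comp measurable_snd).comp (comap_measurable _)
  exact hindep.of_measurable_comap_right ((hD.sub hM).prodMk hM)

lemma integral_sq_sub_condExp_eq_variance_sub {m : MeasurableSpace Ω} (hm : m ≤ mΩ)
    [IsProbabilityMeasure μ] {X : Ω → ℝ} (hX : MemLp X 2 μ) :
    ∫ ω, (X ω - μ[X | m] ω) ^ 2 ∂μ = variance X μ - variance (μ[X | m]) μ := by
  rw [← integral_condVar_add_variance_condExp hm hX, condVar, integral_condExp hm]
  simp only [Pi.pow_apply, Pi.sub_apply, add_sub_cancel_right]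

lemma eq_indicator_of_forall_eq_zero_or_eq_one {R : Ω → ℝ} (hR : ∀ ω, R ω = 0 ∨ R ω = 1) :
    R = {ω | R ω = 1}.indicator 1 := by
  funext ω
  rcases hR ω with h | h <;> simp [h]

lemma memLp_of_forall_eq_zero_or_eq_one [IsFiniteMeasure μ] {R : Ω → ℝ} (hRm : Measurable R)
    (hR : ∀ ω, R ω = 0 ∨ R ω = 1) (q : ℝ≥0∞) : MemLp R q μ := by
  rw [eq_indicator_of_forall_eq_zero_or_eq_one hR]
  exact (memLp_const 1).indicator (hRm (measurableSet_singleton 1))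

lemma integral_of_forall_eq_zero_or_eq_one {R : Ω → ℝ} (hRm : Measurable R)
    (hR : ∀ ω, R ω = 0 ∨ R ω = 1) : ∫ ω, R ω ∂μ = μ.real {ω | R ω = 1} := by
  conv_lhs => rw [eq_indicator_of_forall_eq_zero_or_eq_one hR]
  exact integral_indicator_one (hRm (measurableSet_singleton 1))

lemma variance_of_forall_eq_zero_or_eq_one [IsProbabilityMeasure μ] {R : Ω → ℝ}
    (hRm : Measurable R) (hR : ∀ ω, R ω = 0 ∨ R ω = 1) :
    variance R μ = μ.real {ω | R ω = 1} * (1 - μ.real {ω | R ω = 1}) := by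
  have hsq : R ^ 2 = R := by
    funext ω; rcases hR ω with h | h <;> simp [h]
  rw [variance_eq_sub (memLp_of_forall_eq_zero_or_eq_one hRm hR 2), hsq,
    integral_of_forall_eq_zero_or_eq_one hRm hR]
  ring

lemma IndepFun.memLp_two_mul {W X : Ω → ℝ} (hWX : IndepFun W X μ) (hW : MemLp W 2 μ)
    (hX : MemLp X 2 μ) : MemLp (fun ω => W ω * X ω) 2 μ := by
  have hWX_sq : IndepFun (fun ω => W ω ^ 2) (fun ω => X ω ^ 2) μ :=
    hWX.comp (measurable_id.pow_const 2) (measurable_id.pow_const 2)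
  refine (memLp_two_iff_integrable_sq (hW.1.mul hX.1)).2 ?_
  simp only [Pi.mul_apply, mul_pow]
  exact hWX_sq.integrable_mul hW.integrable_sq hX.integrable_sq

lemma IndepFun.integral_mul_eq_integral_of_integral_eq_one {W X : Ω → ℝ} (hWX : IndepFun W X μ)
    (hW : AEStronglyMeasurable W μ) (hX : AEStronglyMeasurable X μ) (hW1 : ∫ ω, W ω ∂μ = 1) :
    ∫ ω, W ω * X ω ∂μ = ∫ ω, X ω ∂μ := by
  rw [← one_mul (∫ ω, X ω ∂μ), ← hW1]
  exact hWX.integral_fun_mul_eq_mul_integral hW hX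

lemma integral_sq_add {X Y : Ω → ℝ} (hX : MemLp X 2 μ) (hY : MemLp Y 2 μ) :
    ∫ ω, (X ω + Y ω) ^ 2 ∂μ =
      ∫ ω, X ω ^ 2 ∂μ + 2 * ∫ ω, X ω * Y ω ∂μ + ∫ ω, Y ω ^ 2 ∂μ := by
  have hXY : Integrable (fun ω => X ω * Y ω) μ := hX.integrable_mul hY
  have hXY2 : Integrable (fun ω => X ω ^ 2 + 2 * (X ω * Y ω)) μ :=
    hX.integrable_sq.add (hXY.const_mul 2)
  simp_rw [add_sq, mul_assoc]
  rw [integral_add hXY2 hY.integrable_sq, integral_add hX.integrable_sq (hXY.const_mul 2),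
    integral_const_mul]

variable {W ε M : Ω → ℝ}

lemma integral_sq_mul_add_of_indepFun (hW : MemLp W 2 μ) (hW1 : ∫ ω, W ω ∂μ = 1)
    (hε : MemLp ε 2 μ) (hM : MemLp M 2 μ) (hind : IndepFun W (fun ω => (ε ω, M ω)) μ) :
    ∫ ω, (W ω * ε ω + M ω) ^ 2 ∂μ =
      (∫ ω, W ω ^ 2 ∂μ) * ∫ ω, ε ω ^ 2 ∂μ + 2 * ∫ ω, ε ω * M ω ∂μ + ∫ ω, M ω ^ 2 ∂μ := by
  have hWε_sq : IndepFun (fun ω => W ω ^ 2) (fun ω => ε ω ^ 2) μ :=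
    hind.comp (measurable_id.pow_const 2) (measurable_fst.pow_const 2)
  have hWε : IndepFun W ε μ := hind.comp measurable_id measurable_fst
  have hWεM : IndepFun W (fun ω => ε ω * M ω) μ :=
    hind.comp measurable_id (measurable_fst.mul measurable_snd)
  rw [integral_sq_add (hWε.memLp_two_mul hW hε) hM]
  simp_rw [mul_pow, mul_assoc]
  rw [hWε_sq.integral_fun_mul_eq_mul_integral hW.integrable_sq.1 hε.integrable_sq.1,
    hWεM.integral_mul_eq_integral_of_integral_eq_one hW.1 (hε.integrable_mul hM).1 hW1]

lemma variance_mul_add_of_indepFun [IsProbabilityMeasure μ] (hW : MemLp W 2 μ)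
    (hW1 : ∫ ω, W ω ∂μ = 1) (hε : MemLp ε 2 μ) (hM : MemLp M 2 μ) (hind : IndepFun W (fun ω => (ε ω, M ω)) μ) :
    variance (fun ω => W ω * ε ω + M ω) μ =
      variance (fun ω => ε ω + M ω) μ + variance W μ * ∫ ω, ε ω ^ 2 ∂μ := by
  have hWε : IndepFun W ε μ := hind.comp measurable_id measurable_fst
  have hWε_memLp : MemLp (fun ω => W ω * ε ω) 2 μ := hWε.memLp_two_mul hW hε
  have hWεM_memLp : MemLp (fun ω => W ω * ε ω + M ω) 2 μ := hWε_memLp.add hM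
  have hεM_memLp : MemLp (fun ω => ε ω + M ω) 2 μ := hε.add hM
  rw [variance_eq_sub hWεM_memLp, variance_eq_sub hεM_memLp, variance_eq_sub hW]
  simp only [Pi.pow_apply]
  rw [integral_sq_mul_add_of_indepFun hW hW1 hε hM hind, integral_sq_add hε hM,
    integral_add (hWε_memLp.integrable one_le_two) (hM.integrable one_le_two),
    integral_add (hε.integrable one_le_two) (hM.integrable one_le_two),
    hWε.integral_mul_eq_integral_of_integral_eq_one hW.1 hε.1 hW1, hW1]
  ring

end ProbabilityTheory

theorem stmt6_general {Ω : Type*} [MeasurableSpace Ω] (μ : Measure Ω) [IsProbabilityMeasure μ]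
    (A Y D R : Ω → ℝ)
    (hAm : Measurable A) (hYm : Measurable Y) (hRm : Measurable R)
    (hD2 : MemLp D 2 μ)
    (hRbin : ∀ ω, R ω = 0 ∨ R ω = 1)
    (hindep : IndepFun R (fun ω => (A ω, Y ω, D ω)) μ)
    (p : ℝ) (hp : p = (μ {ω | R ω = 1}).toReal) (hppos : 0 < p)
    (Dstar : Ω → ℝ)
    (hDstar : Dstar = fun ω =>
      (R ω / p) * (D ω - (μ[D | sigmaAY A Y]) ω) + (μ[D | sigmaAY A Y]) ω) :
    variance Dstar μ =
      variance D μ / p - ((1 - p) / p) * variance (μ[D | sigmaAY A Y]) μ := by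
  set M := μ[D | sigmaAY A Y]
  have hle : sigmaAY A Y ≤ ‹MeasurableSpace Ω› := (hAm.prodMk hYm).comap_le
  have hM : MemLp M 2 μ := hD2.condExp one_le_two
  have hRp : μ.real {ω | R ω = 1} = p := by rw [hp, measureReal_def]
  have hind : IndepFun (fun ω => R ω / p) (fun ω => (D ω - M ω, M ω)) μ :=
    hindep.sub_condExp_prodMk_condExp.comp (measurable_id.div_const p) measurable_id
  have hW : MemLp (fun ω => R ω / p) 2 μ := by
    simpa only [div_eq_mul_inv] using (memLp_of_forall_eq_zero_or_eq_one hRm hRbin 2).mul_const p⁻¹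
  have hW1 : ∫ ω, R ω / p ∂μ = 1 := by
    rw [integral_div, integral_of_forall_eq_zero_or_eq_one hRm hRbin, hRp, div_self hppos.ne']
  have hW_var : variance (fun ω => R ω / p) μ = (1 - p) / p := by
    simp_rw [div_eq_mul_inv, mul_comm _ p⁻¹]
    rw [variance_const_mul, variance_of_forall_eq_zero_or_eq_one hRm hRbin, hRp]
    field_simp
  have hε : MemLp (fun ω => D ω - M ω) 2 μ := hD2.sub hM
  rw [hDstar, variance_mul_add_of_indepFun hW hW1 hε hM hind]
  simp only [sub_add_cancel]
  rw [integral_sq_sub_condExp_eq_variance_sub hle hD2, hW_var]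
  field_simp
  ring

/-- If `D` is square-integrable with `E[D] = 0` and `R` is a binary indicator independent of
`(A, Y, D)` with `P(R=1) = p ∈ (0,1]`, and `D* = (R/p)(D − E[D|A,Y]) + E[D|A,Y]`, then
`Var(D*) = Var(D)/p − ((1−p)/p)·Var(E[D|A,Y])`. -/
theorem stmt6 {Ω : Type*} [MeasurableSpace Ω] (μ : Measure Ω) [IsProbabilityMeasure μ]
    (A Y D R : Ω → ℝ)
    (hAm : Measurable A) (hYm : Measurable Y) (hDm : Measurable D) (hRm : Measurable R)
    (hD2 : MemLp D 2 μ) (hDmean : ∫ ω, D ω ∂μ = 0)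
    (hRbin : ∀ ω, R ω = 0 ∨ R ω = 1)
    (hindep : IndepFun R (fun ω => (A ω, Y ω, D ω)) μ)
    (p : ℝ) (hp : p = (μ {ω | R ω = 1}).toReal) (hppos : 0 < p) (hple : p ≤ 1)
    (Dstar : Ω → ℝ)
    (hDstar : Dstar = fun ω =>
      (R ω / p) * (D ω - (μ[D | sigmaAY A Y]) ω) + (μ[D | sigmaAY A Y]) ω) :
    variance Dstar μ =
      variance D μ / p - ((1 - p) / p) * variance (μ[D | sigmaAY A Y]) μ :=
  stmt6_general μ A Y D R hAm hYm hRm hD2 hRbin hindep p hp hppos Dstar hDstar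
end

section
/- Under one-sided noncompliance and the conditional independence R† ⟂ (Z, Y) | A, the complete-case control-arm outcome mean is unbiased: E(Y | Z=0, R†=1) = E(Y | Z=0), provided P(Z=0, R†=1) > 0. -/
open MeasureTheory ProbabilityTheory
open scoped ENNReal

/-!
Under one-sided noncompliance the control arm `{Z = 0}` lies, up to a null set, in `{A = 0}`.
The conditional independence given `A = 0` then says that, as measures on the outcome space,
the law of `Y` on `{Z = 0, R† = 1}` is a constant multiple of its law on `{Z = 0}`
(the constant being `P(R† = 1 | A = 0)`), and proportional laws have the same mean.
-/

section

variable {Ω : Type*} [MeasurableSpace Ω] {μ : Measure Ω} {Y : Ω → ℝ} {s t : Set Ω}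

theorem cexp_eq_of_map_restrict_eq_smul [IsFiniteMeasure μ] (hY : Measurable Y) {c : ℝ≥0∞}
    (hc : c ≠ ∞) (hs : μ s ≠ 0) (h : (μ.restrict s).map Y = c • (μ.restrict t).map Y) :
    cexp μ Y s = cexp μ Y t := by
  have hint : ∫ ω in s, Y ω ∂μ = c.toReal * ∫ ω in t, Y ω ∂μ := by
    calc ∫ ω in s, Y ω ∂μ = ∫ y, y ∂(μ.restrict s).map Y :=
          (integral_map hY.aemeasurable aestronglyMeasurable_id).symm
      _ = c.toReal * ∫ y, y ∂(μ.restrict t).map Y := by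
          rw [h, integral_smul_measure, smul_eq_mul]
      _ = c.toReal * ∫ ω in t, Y ω ∂μ :=
          congrArg (c.toReal * ·) (integral_map hY.aemeasurable aestronglyMeasurable_id)
  have hmass : μ s = c * μ t := by
    simpa [Measure.map_apply hY MeasurableSet.univ] using congrArg (· Set.univ) h
  have hc0 : c.toReal ≠ 0 := ENNReal.toReal_ne_zero.2 ⟨fun h0 => hs (by simp [hmass, h0]), hc⟩
  rw [cexp, cexp, hint, hmass, ENNReal.toReal_mul, mul_div_mul_left _ _ hc0]

theorem map_restrict_eq_smul_of_measure_mul_eq (hY : Measurable Y) {a k : ℝ≥0∞}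
    (ha : a ≠ 0) (ha' : a ≠ ∞)
    (h : ∀ B, MeasurableSet B → μ (Y ⁻¹' B ∩ s) * a = k * μ (Y ⁻¹' B ∩ t)) :
    (μ.restrict s).map Y = (k / a) • (μ.restrict t).map Y := by
  ext B hB
  rw [Measure.smul_apply, Measure.map_apply hY hB, Measure.map_apply hY hB,
    Measure.restrict_apply (hY hB), Measure.restrict_apply (hY hB), smul_eq_mul,
    ← ENNReal.mul_div_right_comm, ENNReal.eq_div_iff ha ha', mul_comm]
  exact h B hB

theorem inter_setOf_eq_zero_ae_eq_self {Z A : Ω → ℝ} (hA : ∀ ω, A ω = 0 ∨ A ω = 1)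
    (hnull : μ {ω | Z ω = 0 ∧ A ω = 1} = 0) (hs : s ⊆ {ω | Z ω = 0}) :
    (s ∩ {ω | A ω = 0} : Set Ω) =ᵐ[μ] s := by
  refine ae_eq_set.2 ⟨by rw [Set.sdiff_eq_empty.2 Set.inter_subset_left, measure_empty],
    measure_mono_null ?_ hnull⟩
  rintro ω ⟨hωs, hωA⟩
  exact ⟨hs hωs, (hA ω).resolve_left fun h => hωA ⟨hωs, h⟩⟩

end

theorem stmt11_general {Ω : Type*} [MeasurableSpace Ω] (μ : Measure Ω) [IsProbabilityMeasure μ]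
    (Z A Rdag Y : Ω → ℝ)
    (hYm : Measurable Y)
    (hAbin : ∀ ω, A ω = 0 ∨ A ω = 1)
    -- one-sided noncompliance: {Z=0, A=1} is a null event
    (hos : μ {ω | Z ω = 0 ∧ A ω = 1} = 0)
    -- conditional independence R† ⟂ (Z, Y) | A, as a factorization given each {A = a}
    (hci : ∀ a : ℝ, 0 < μ {ω | A ω = a} →
      ∀ (r z : ℝ) (B : Set ℝ), MeasurableSet B →
        μ ({ω | Rdag ω = r} ∩ {ω | Z ω = z} ∩ {ω | Y ω ∈ B} ∩ {ω | A ω = a}) *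
            μ {ω | A ω = a} =
          μ ({ω | Rdag ω = r} ∩ {ω | A ω = a}) *
            μ ({ω | Z ω = z} ∩ {ω | Y ω ∈ B} ∩ {ω | A ω = a}))
    (hpos : 0 < μ {ω | Z ω = 0 ∧ Rdag ω = 1}) :
    cexp μ Y {ω | Z ω = 0 ∧ Rdag ω = 1} = cexp μ Y {ω | Z ω = 0} := by
  have hcontrol {s : Set Ω} (hs : s ⊆ {ω | Z ω = 0}) :=
    inter_setOf_eq_zero_ae_eq_self (μ := μ) hAbin hos hs
  have hA0 : 0 < μ {ω | A ω = 0} := hpos.trans_le <| by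
    rw [← measure_congr (hcontrol fun ω hω => hω.1)]
    exact measure_mono Set.inter_subset_right
  have hfactor : ∀ B, MeasurableSet B →
      μ (Y ⁻¹' B ∩ {ω | Z ω = 0 ∧ Rdag ω = 1}) * μ {ω | A ω = 0} =
        μ ({ω | Rdag ω = 1} ∩ {ω | A ω = 0}) * μ (Y ⁻¹' B ∩ {ω | Z ω = 0}) := by
    intro B hB
    rw [← measure_congr (hcontrol fun ω hω => hω.2.1),
      ← measure_congr (hcontrol (s := Y ⁻¹' B ∩ {ω | Z ω = 0}) fun ω hω => hω.2)]
    convert hci 0 hA0 1 0 B hB using 3 <;> ext ω <;>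
      simp only [Set.mem_inter_iff, Set.mem_preimage, Set.mem_ofPred_eq] <;> tauto
  exact cexp_eq_of_map_restrict_eq_smul hYm (ENNReal.div_ne_top (measure_ne_top μ _) hA0.ne')
    hpos.ne' (map_restrict_eq_smul_of_measure_mul_eq hYm hA0.ne' (measure_ne_top μ _) hfactor)

/-- Under one-sided noncompliance and the conditional independence `R† ⟂ (Z, Y) | A`,
the complete-case control-arm outcome mean is unbiased:
`E(Y | Z=0, R†=1) = E(Y | Z=0)`, provided `P(Z=0, R†=1) > 0`. -/
theorem stmt11 {Ω : Type*} [MeasurableSpace Ω] (μ : Measure Ω) [IsProbabilityMeasure μ]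
    (Z A Rdag Y : Ω → ℝ)
    (hZm : Measurable Z) (hAm : Measurable A) (hRdagm : Measurable Rdag) (hYm : Measurable Y)
    (hZbin : ∀ ω, Z ω = 0 ∨ Z ω = 1)
    (hAbin : ∀ ω, A ω = 0 ∨ A ω = 1)
    (hRdagbin : ∀ ω, Rdag ω = 0 ∨ Rdag ω = 1)
    (hYint : Integrable Y μ)
    -- one-sided noncompliance: {Z=0, A=1} is a null event
    (hos : μ {ω | Z ω = 0 ∧ A ω = 1} = 0)
    -- conditional independence R† ⟂ (Z, Y) | A, as a factorization given each {A = a}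
    (hci : ∀ a : ℝ, 0 < μ {ω | A ω = a} →
      ∀ (r z : ℝ) (B : Set ℝ), MeasurableSet B →
        μ ({ω | Rdag ω = r} ∩ {ω | Z ω = z} ∩ {ω | Y ω ∈ B} ∩ {ω | A ω = a}) *
            μ {ω | A ω = a} =
          μ ({ω | Rdag ω = r} ∩ {ω | A ω = a}) *
            μ ({ω | Z ω = z} ∩ {ω | Y ω ∈ B} ∩ {ω | A ω = a}))
    (hZ0pos : 0 < μ {ω | Z ω = 0})
    (hpos : 0 < μ {ω | Z ω = 0 ∧ Rdag ω = 1}) :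
    cexp μ Y {ω | Z ω = 0 ∧ Rdag ω = 1} = cexp μ Y {ω | Z ω = 0} :=
  stmt11_general μ Z A Rdag Y hYm hAbin hos hci hpos
end

section
/- Bias formula for the complete-case estimand under one-sided noncompliance: Ψ† − Ψ^f = α · β · P(R†=0 | Z=1) / E(A | Z=1, R†=1), where α = E(A|Z=1,R†=1) − E(A|Z=1,R†=0), β = E(Y|Z=1,A=1) − E(Y|Z=1,A=0) − Ψ^f, Ψ^f = [E(Y|Z=1) − E(Y|Z=0)]/E(A|Z=1), and Ψ† = [E(Y|Z=1,R†=1) − E(Y|Z=0)]/E(A|Z=1,R†=1). -/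
open MeasureTheory ProbabilityTheory
open scoped ENNReal

/-- Conditional probability `P(s | t)`. -/
noncomputable def cprob {Ω : Type*} [MeasurableSpace Ω] (μ : Measure Ω) (s t : Set Ω) : ℝ :=
  (μ (s ∩ t)).toReal / (μ t).toReal

lemma sdiff_setOf_eq_one_of_binary {Ω : Type*} {g : Ω → ℝ}
    (hg : ∀ ω, g ω = 0 ∨ g ω = 1) (s : Set Ω) : s \ {ω | g ω = 1} = s ∩ {ω | g ω = 0} := by
  ext ω
  rcases hg ω with h | h <;> simp [h]

section Conditioning

variable {Ω : Type*} [MeasurableSpace Ω] {μ : Measure Ω} {g : Ω → ℝ}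

/-- This is `E(Y | s) = E(Y | t)` in a form that survives `μ s = 0`. -/
lemma setIntegral_eq_measureReal_mul_cexp_of_map_proportional {Y : Ω → ℝ} (hY : Measurable Y)
    {s t : Set Ω} {c d : ℝ≥0∞} (hc : c ≠ 0) (hc' : c ≠ ∞) (ht : μ.real t ≠ 0)
    (h : ∀ B, MeasurableSet B → μ (Y ⁻¹' B ∩ s) * c = d * μ (Y ⁻¹' B ∩ t)) :
    ∫ ω in s, Y ω ∂μ = μ.real s * cexp μ Y t := by
  have hlaw : c • (μ.restrict s).map Y = d • (μ.restrict t).map Y := by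
    ext B hB
    rw [Measure.smul_apply, Measure.smul_apply, Measure.map_apply hY hB,
      Measure.map_apply hY hB, Measure.restrict_apply (hY hB), Measure.restrict_apply (hY hB),
      smul_eq_mul, smul_eq_mul, mul_comm, h B hB]
  have hmean : c.toReal * ∫ ω in s, Y ω ∂μ = d.toReal * ∫ ω in t, Y ω ∂μ := by
    have := congrArg (fun ν => ∫ x, x ∂ν) hlaw
    simp only [integral_smul_measure, smul_eq_mul] at this
    rwa [integral_map (f := fun x => x) hY.aemeasurable aestronglyMeasurable_id,
      integral_map (f := fun x => x) hY.aemeasurable aestronglyMeasurable_id] at this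
  have hmass : (μ s).toReal * c.toReal = d.toReal * (μ t).toReal := by
    simpa only [Set.preimage_univ, Set.univ_inter, ENNReal.toReal_mul] using
      congrArg ENNReal.toReal (h Set.univ MeasurableSet.univ)
  have hc₀ : c.toReal ≠ 0 := ENNReal.toReal_ne_zero.mpr ⟨hc, hc'⟩
  simp only [cexp, Measure.real] at ht ⊢
  rw [mul_div_assoc', eq_div_iff ht]
  apply mul_left_cancel₀ hc₀
  linear_combination (μ t).toReal * hmean - (∫ ω in t, Y ω ∂μ) * hmass

lemma cexp_eq_div_of_binary (hgm : Measurable g) (hg : ∀ ω, g ω = 0 ∨ g ω = 1) (s : Set Ω) :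
    cexp μ g s = μ.real (s ∩ {ω | g ω = 1}) / μ.real s := by
  have hg_eq : g = {ω | g ω = 1}.indicator 1 := by
    ext ω
    rcases hg ω with h | h <;> simp [h]
  have hm : MeasurableSet {ω | g ω = 1} := hgm (measurableSet_singleton 1)
  rw [cexp, hg_eq, integral_indicator_one hm, measureReal_restrict_apply hm,
    Set.inter_comm, ← hg_eq]
  rfl

lemma setIntegral_inter_add_of_binary (hgm : Measurable g)
    (hg : ∀ ω, g ω = 0 ∨ g ω = 1) {f : Ω → ℝ} (hf : Integrable f μ) (s : Set Ω) :
    ∫ ω in s ∩ {ω | g ω = 1}, f ω ∂μ + ∫ ω in s ∩ {ω | g ω = 0}, f ω ∂μ = ∫ ω in s, f ω ∂μ := by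
  rw [← sdiff_setOf_eq_one_of_binary hg]
  exact integral_inter_add_sdiff (hgm (measurableSet_singleton 1)) hf.integrableOn

variable [IsFiniteMeasure μ]

lemma cexp_mul_measureReal (f : Ω → ℝ) (s : Set Ω) :
    cexp μ f s * μ.real s = ∫ ω in s, f ω ∂μ := by
  by_cases hs : μ.real s = 0
  · rw [hs, mul_zero, setIntegral_measure_zero f ((measureReal_eq_zero_iff).mp hs)]
  · exact div_mul_cancel₀ _ hs

lemma measureReal_inter_add_of_binary (hgm : Measurable g)
    (hg : ∀ ω, g ω = 0 ∨ g ω = 1) (s : Set Ω) :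
    μ.real (s ∩ {ω | g ω = 1}) + μ.real (s ∩ {ω | g ω = 0}) = μ.real s := by
  rw [← sdiff_setOf_eq_one_of_binary hg]
  exact measureReal_inter_add_sdiff (hgm (measurableSet_singleton 1))

lemma one_sub_cexp_eq_div_of_binary (hgm : Measurable g)
    (hg : ∀ ω, g ω = 0 ∨ g ω = 1) {s : Set Ω} (hs : μ.real s ≠ 0) :
    1 - cexp μ g s = μ.real (s ∩ {ω | g ω = 0}) / μ.real s := by
  rw [cexp_eq_div_of_binary hgm hg, eq_div_iff hs, sub_mul, div_mul_cancel₀ _ hs, one_mul,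
    ← measureReal_inter_add_of_binary hgm hg s]
  ring

lemma cprob_eq_one_sub_cexp (hgm : Measurable g)
    (hg : ∀ ω, g ω = 0 ∨ g ω = 1) {s : Set Ω} (hs : μ.real s ≠ 0) :
    cprob μ {ω | g ω = 0} s = 1 - cexp μ g s := by
  rw [one_sub_cexp_eq_div_of_binary hgm hg hs, Set.inter_comm]
  rfl

/-- Law of total expectation over `s ∩ {g = 1}`, `s ∩ {g = 0}`; the cell means `c₁`, `c₀` enter
only through the integrals, so null cells are allowed. -/
lemma cexp_eq_mix_of_binary (hgm : Measurable g)
    (hg : ∀ ω, g ω = 0 ∨ g ω = 1) {f : Ω → ℝ} (hf : Integrable f μ) {s : Set Ω}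
    (hs : μ.real s ≠ 0) {c₁ c₀ : ℝ}
    (h₁ : ∫ ω in s ∩ {ω | g ω = 1}, f ω ∂μ = μ.real (s ∩ {ω | g ω = 1}) * c₁)
    (h₀ : ∫ ω in s ∩ {ω | g ω = 0}, f ω ∂μ = μ.real (s ∩ {ω | g ω = 0}) * c₀) :
    cexp μ f s = cexp μ g s * c₁ + (1 - cexp μ g s) * c₀ := by
  rw [one_sub_cexp_eq_div_of_binary hgm hg hs, cexp_eq_div_of_binary hgm hg, cexp,
    ← setIntegral_inter_add_of_binary hgm hg hf, h₁, h₀]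
  simp only [Measure.real]
  ring

lemma cexp_eq_mix_cexp_of_binary (hgm : Measurable g)
    (hg : ∀ ω, g ω = 0 ∨ g ω = 1) {f : Ω → ℝ} (hf : Integrable f μ) {s : Set Ω}
    (hs : μ.real s ≠ 0) :
    cexp μ f s = cexp μ g s * cexp μ f (s ∩ {ω | g ω = 1}) +
      (1 - cexp μ g s) * cexp μ f (s ∩ {ω | g ω = 0}) :=
  cexp_eq_mix_of_binary hgm hg hf hs (by rw [mul_comm, cexp_mul_measureReal])
    (by rw [mul_comm, cexp_mul_measureReal])

lemma setIntegral_completeCase_eq_of_condIndep {Z A Rdag Y : Ω → ℝ} (hYm : Measurable Y)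
    (hci : ∀ a : ℝ, 0 < μ {ω | A ω = a} →
      ∀ (r z : ℝ) (B : Set ℝ), MeasurableSet B →
        μ ({ω | Rdag ω = r} ∩ {ω | Z ω = z} ∩ {ω | Y ω ∈ B} ∩ {ω | A ω = a}) *
            μ {ω | A ω = a} =
          μ ({ω | Rdag ω = r} ∩ {ω | A ω = a}) *
            μ ({ω | Z ω = z} ∩ {ω | Y ω ∈ B} ∩ {ω | A ω = a}))
    {a : ℝ} (ha : 0 < μ {ω | Z ω = 1 ∧ A ω = a}) :
    ∫ ω in {ω | Z ω = 1 ∧ Rdag ω = 1} ∩ {ω | A ω = a}, Y ω ∂μ =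
      μ.real ({ω | Z ω = 1 ∧ Rdag ω = 1} ∩ {ω | A ω = a}) *
        cexp μ Y {ω | Z ω = 1 ∧ A ω = a} := by
  have hA : 0 < μ {ω | A ω = a} := ha.trans_le (measure_mono fun ω h => h.2)
  refine setIntegral_eq_measureReal_mul_cexp_of_map_proportional hYm
    (d := μ ({ω | Rdag ω = 1} ∩ {ω | A ω = a})) hA.ne' (measure_ne_top _ _)
    (ENNReal.toReal_pos ha.ne' (measure_ne_top _ _)).ne' fun B hB => ?_
  convert hci a hA 1 1 B hB using 3 <;> ext ω <;>
    simp only [Set.mem_inter_iff, Set.mem_preimage, Set.mem_ofPred_eq] <;> tauto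

end Conditioning

lemma completeCase_bias_identity {π π₀ π' ρ μ₁ μ₀ m m' t : ℝ} (hπ : π ≠ 0) (hπ' : π' ≠ 0)
    (hmix : π' = ρ * π + (1 - ρ) * π₀) (hcc : m = π * μ₁ + (1 - π) * μ₀)
    (hfull : m' = π' * μ₁ + (1 - π') * μ₀) :
    (m - t) / π - (m' - t) / π' = (π - π₀) * (μ₁ - μ₀ - (m' - t) / π') * ((1 - ρ) / π) := by
  have hweight : (π - π₀) * (1 - ρ) = π - π' := by rw [hmix]; ring
  subst hcc hfull
  field_simp
  linear_combination (μ₀ - t) * hweight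

theorem stmt12_general {Ω : Type*} [MeasurableSpace Ω] (μ : Measure Ω) [IsProbabilityMeasure μ]
    (Z A Rdag Y : Ω → ℝ)
    (hAm : Measurable A) (hRdagm : Measurable Rdag) (hYm : Measurable Y)
    (hAbin : ∀ ω, A ω = 0 ∨ A ω = 1)
    (hRdagbin : ∀ ω, Rdag ω = 0 ∨ Rdag ω = 1)
    (hYint : Integrable Y μ)
    -- conditional independence R† ⟂ (Z, Y) | A, as a factorization given each {A = a}
    (hci : ∀ a : ℝ, 0 < μ {ω | A ω = a} →
      ∀ (r z : ℝ) (B : Set ℝ), MeasurableSet B →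
        μ ({ω | Rdag ω = r} ∩ {ω | Z ω = z} ∩ {ω | Y ω ∈ B} ∩ {ω | A ω = a}) *
            μ {ω | A ω = a} =
          μ ({ω | Rdag ω = r} ∩ {ω | A ω = a}) *
            μ ({ω | Z ω = z} ∩ {ω | Y ω ∈ B} ∩ {ω | A ω = a}))
    -- positivity of the conditioning events
    (h1 : 0 < μ {ω | Z ω = 1 ∧ Rdag ω = 1})
    (h3 : 0 < μ {ω | Z ω = 1 ∧ A ω = 1}) (h4 : 0 < μ {ω | Z ω = 1 ∧ A ω = 0})
    (hApos : 0 < cexp μ A {ω | Z ω = 1})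
    (hApos' : 0 < cexp μ A {ω | Z ω = 1 ∧ Rdag ω = 1}) :
    (cexp μ Y {ω | Z ω = 1 ∧ Rdag ω = 1} - cexp μ Y {ω | Z ω = 0}) /
          cexp μ A {ω | Z ω = 1 ∧ Rdag ω = 1} -
        (cexp μ Y {ω | Z ω = 1} - cexp μ Y {ω | Z ω = 0}) / cexp μ A {ω | Z ω = 1} =
      (cexp μ A {ω | Z ω = 1 ∧ Rdag ω = 1} - cexp μ A {ω | Z ω = 1 ∧ Rdag ω = 0}) *
        (cexp μ Y {ω | Z ω = 1 ∧ A ω = 1} - cexp μ Y {ω | Z ω = 1 ∧ A ω = 0} -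
          (cexp μ Y {ω | Z ω = 1} - cexp μ Y {ω | Z ω = 0}) / cexp μ A {ω | Z ω = 1}) *
        (cprob μ {ω | Rdag ω = 0} {ω | Z ω = 1} / cexp μ A {ω | Z ω = 1 ∧ Rdag ω = 1}) := by
  have hZR : μ.real {ω | Z ω = 1 ∧ Rdag ω = 1} ≠ 0 :=
    (ENNReal.toReal_pos h1.ne' (measure_ne_top _ _)).ne'
  have hZ : μ.real {ω | Z ω = 1} ≠ 0 :=
    (ENNReal.toReal_pos (h1.trans_le (measure_mono fun ω h => h.1)).ne' (measure_ne_top _ _)).ne'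
  have hAint : Integrable A μ := .of_bound hAm.aestronglyMeasurable 1
    (.of_forall fun ω => by rcases hAbin ω with h | h <;> simp [h])
  rw [cprob_eq_one_sub_cexp hRdagm hRdagbin hZ]
  exact completeCase_bias_identity hApos'.ne' hApos.ne'
    (cexp_eq_mix_cexp_of_binary hRdagm hRdagbin hAint hZ)
    (cexp_eq_mix_of_binary hAm hAbin hYint hZR
      (setIntegral_completeCase_eq_of_condIndep hYm hci h3)
      (setIntegral_completeCase_eq_of_condIndep hYm hci h4))
    (cexp_eq_mix_cexp_of_binary hAm hAbin hYint hZ)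

/-- Bias formula for the complete-case estimand under one-sided noncompliance:
`Ψ† − Ψᶠ = α·β·P(R†=0 | Z=1)/E(A | Z=1, R†=1)` where
`α = E(A|Z=1,R†=1) − E(A|Z=1,R†=0)`, `β = E(Y|Z=1,A=1) − E(Y|Z=1,A=0) − Ψᶠ`,
`Ψᶠ = [E(Y|Z=1) − E(Y|Z=0)]/E(A|Z=1)` and
`Ψ† = [E(Y|Z=1,R†=1) − E(Y|Z=0)]/E(A|Z=1,R†=1)`. -/
theorem stmt12 {Ω : Type*} [MeasurableSpace Ω] (μ : Measure Ω) [IsProbabilityMeasure μ]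
    (Z A Rdag Y : Ω → ℝ)
    (hZm : Measurable Z) (hAm : Measurable A) (hRdagm : Measurable Rdag) (hYm : Measurable Y)
    (hZbin : ∀ ω, Z ω = 0 ∨ Z ω = 1)
    (hAbin : ∀ ω, A ω = 0 ∨ A ω = 1)
    (hRdagbin : ∀ ω, Rdag ω = 0 ∨ Rdag ω = 1)
    (hYint : Integrable Y μ)
    -- one-sided noncompliance: {Z=0, A=1} is a null event
    (hos : μ {ω | Z ω = 0 ∧ A ω = 1} = 0)
    -- conditional independence R† ⟂ (Z, Y) | A, as a factorization given each {A = a}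
    (hci : ∀ a : ℝ, 0 < μ {ω | A ω = a} →
      ∀ (r z : ℝ) (B : Set ℝ), MeasurableSet B →
        μ ({ω | Rdag ω = r} ∩ {ω | Z ω = z} ∩ {ω | Y ω ∈ B} ∩ {ω | A ω = a}) *
            μ {ω | A ω = a} =
          μ ({ω | Rdag ω = r} ∩ {ω | A ω = a}) *
            μ ({ω | Z ω = z} ∩ {ω | Y ω ∈ B} ∩ {ω | A ω = a}))
    -- positivity of the conditioning events
    (h1 : 0 < μ {ω | Z ω = 1 ∧ Rdag ω = 1}) (h2 : 0 < μ {ω | Z ω = 1 ∧ Rdag ω = 0})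
    (h3 : 0 < μ {ω | Z ω = 1 ∧ A ω = 1}) (h4 : 0 < μ {ω | Z ω = 1 ∧ A ω = 0})
    (h5 : 0 < μ {ω | Z ω = 0})
    (hApos : 0 < cexp μ A {ω | Z ω = 1})
    (hApos' : 0 < cexp μ A {ω | Z ω = 1 ∧ Rdag ω = 1}) :
    (cexp μ Y {ω | Z ω = 1 ∧ Rdag ω = 1} - cexp μ Y {ω | Z ω = 0}) /
          cexp μ A {ω | Z ω = 1 ∧ Rdag ω = 1} -
        (cexp μ Y {ω | Z ω = 1} - cexp μ Y {ω | Z ω = 0}) / cexp μ A {ω | Z ω = 1} =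
      (cexp μ A {ω | Z ω = 1 ∧ Rdag ω = 1} - cexp μ A {ω | Z ω = 1 ∧ Rdag ω = 0}) *
        (cexp μ Y {ω | Z ω = 1 ∧ A ω = 1} - cexp μ Y {ω | Z ω = 1 ∧ A ω = 0} -
          (cexp μ Y {ω | Z ω = 1} - cexp μ Y {ω | Z ω = 0}) / cexp μ A {ω | Z ω = 1}) *
        (cprob μ {ω | Rdag ω = 0} {ω | Z ω = 1} / cexp μ A {ω | Z ω = 1 ∧ Rdag ω = 1}) :=
  stmt12_general μ Z A Rdag Y hAm hRdagm hYm hAbin hRdagbin hYint hci h1 h3 h4 hApos hApos'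
end

section
/- Key decomposition identity used in the bias proof: E(Y | Z=1, R†=1) − E(Y | Z=1) = [E(Y|Z=1,A=1) − E(Y|Z=1,A=0)] · [E(A|Z=1,R†=1) − E(A|Z=1)]. -/
open MeasureTheory ProbabilityTheory
open scoped ENNReal

/-! The proof is the law of total expectation over the partition `{A = 1}`, `{A = 0}`:
`E(Y | S) = E(Y | S, A=1) E(A | S) + E(Y | S, A=0) (1 - E(A | S))` for `S = {Z = 1}` and for
`S = {Z = 1, R† = 1}`. The conditional mean equality makes the two stratum means agree for both
choices of `S`, so the difference of the two expansions factors. Since `x / 0 = 0`, the expansion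
holds also for null `S`. -/

namespace cexp

variable {Ω : Type*} [MeasurableSpace Ω] {μ : Measure Ω}

lemma indicator_one {t : Set Ω} (ht : MeasurableSet t) (s : Set Ω) :
    cexp μ (t.indicator 1) s = μ.real (s ∩ t) / μ.real s := by
  rw [cexp, integral_indicator_one ht, measureReal_restrict_apply ht, Set.inter_comm]
  rfl

variable [IsFiniteMeasure μ]

lemma mul_measureReal (f : Ω → ℝ) (s : Set Ω) :
    cexp μ f s * μ.real s = ∫ ω in s, f ω ∂μ := by
  rcases eq_or_ne (μ s) 0 with h | h
  · simp [cexp, h, Measure.restrict_eq_zero.2 h]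
  · exact div_mul_cancel₀ _ ((measureReal_ne_zero_iff (measure_ne_top μ s)).2 h)

lemma eq_mul_add_mul_sdiff {Y : Ω → ℝ} {s t : Set Ω} (ht : MeasurableSet t)
    (hY : IntegrableOn Y s μ) :
    cexp μ Y s = cexp μ Y (s ∩ t) * cexp μ (t.indicator 1) s
      + cexp μ Y (s \ t) * (1 - cexp μ (t.indicator 1) s) := by
  rw [indicator_one ht]
  rcases eq_or_ne (μ.real s) 0 with hs | hs
  · have hsdiff : μ.real (s \ t) = 0 :=
      le_antisymm (hs ▸ measureReal_mono Set.sdiff_subset) measureReal_nonneg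
    simp [cexp, ← measureReal_def, hs, hsdiff]
  · have hmeas := measureReal_inter_add_sdiff (μ := μ) (s := s) ht
    rw [cexp, ← measureReal_def, ← integral_inter_add_sdiff ht hY,
      ← mul_measureReal Y (s ∩ t), ← mul_measureReal Y (s \ t)]
    rw [← hmeas] at hs ⊢
    field_simp
    ring

lemma eq_mul_add_mul_of_binary {A Y : Ω → ℝ} (hAm : Measurable A) (hA : ∀ ω, A ω = 0 ∨ A ω = 1)
    {s : Set Ω} (hY : IntegrableOn Y s μ) :
    cexp μ Y s = cexp μ Y (s ∩ {ω | A ω = 1}) * cexp μ A s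
      + cexp μ Y (s ∩ {ω | A ω = 0}) * (1 - cexp μ A s) := by
  have hA_eq : {ω | A ω = 1}.indicator 1 = A := by
    ext ω
    rcases hA ω with h | h <;> simp [Set.indicator, h]
  have hsdiff : s \ {ω | A ω = 1} = s ∩ {ω | A ω = 0} := by
    ext ω
    rcases hA ω with h | h <;> simp [h]
  have hA1 : MeasurableSet {ω | A ω = 1} := hAm (measurableSet_singleton 1)
  simpa only [hA_eq, hsdiff] using eq_mul_add_mul_sdiff hA1 hY

end cexp

theorem stmt13_general {Ω : Type*} [MeasurableSpace Ω] (μ : Measure Ω) [IsProbabilityMeasure μ]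
    (Z A Rdag Y : Ω → ℝ)
    (hAm : Measurable A)
    (hAbin : ∀ ω, A ω = 0 ∨ A ω = 1)
    (hYint : Integrable Y μ)
    -- conditional mean equality implied by R† ⟂ (Z,Y) | A
    (hmean : ∀ a : ℝ, a = 0 ∨ a = 1 →
      cexp μ Y {ω | Z ω = 1 ∧ A ω = a ∧ Rdag ω = 1} = cexp μ Y {ω | Z ω = 1 ∧ A ω = a}) :
    cexp μ Y {ω | Z ω = 1 ∧ Rdag ω = 1} - cexp μ Y {ω | Z ω = 1} =
      (cexp μ Y {ω | Z ω = 1 ∧ A ω = 1} - cexp μ Y {ω | Z ω = 1 ∧ A ω = 0}) *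
        (cexp μ A {ω | Z ω = 1 ∧ Rdag ω = 1} - cexp μ A {ω | Z ω = 1}) := by
  have hstratum : ∀ a : ℝ, a = 0 ∨ a = 1 →
      cexp μ Y ({ω | Z ω = 1 ∧ Rdag ω = 1} ∩ {ω | A ω = a}) = cexp μ Y {ω | Z ω = 1 ∧ A ω = a} := by
    intro a ha
    rw [← hmean a ha]
    congr 1
    ext ω
    simp only [Set.mem_inter_iff, Set.mem_ofPred_eq]
    tauto
  rw [cexp.eq_mul_add_mul_of_binary hAm hAbin (s := {ω | Z ω = 1}) hYint.integrableOn,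
    cexp.eq_mul_add_mul_of_binary hAm hAbin (s := {ω | Z ω = 1 ∧ Rdag ω = 1}) hYint.integrableOn,
    hstratum 1 (Or.inr rfl), hstratum 0 (Or.inl rfl), ← Set.ofPred_and, ← Set.ofPred_and]
  ring

/-- Key decomposition identity used in the bias proof:
`E(Y | Z=1, R†=1) − E(Y | Z=1)
  = [E(Y|Z=1,A=1) − E(Y|Z=1,A=0)] · [E(A|Z=1,R†=1) − E(A|Z=1)]`. -/
theorem stmt13 {Ω : Type*} [MeasurableSpace Ω] (μ : Measure Ω) [IsProbabilityMeasure μ]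
    (Z A Rdag Y : Ω → ℝ)
    (hZm : Measurable Z) (hAm : Measurable A) (hRdagm : Measurable Rdag) (hYm : Measurable Y)
    (hZbin : ∀ ω, Z ω = 0 ∨ Z ω = 1)
    (hAbin : ∀ ω, A ω = 0 ∨ A ω = 1)
    (hRdagbin : ∀ ω, Rdag ω = 0 ∨ Rdag ω = 1)
    (hYint : Integrable Y μ)
    -- positivity: P(Z=1, A=a) > 0 and P(Z=1, R†=1, A=a) > 0 for a ∈ {0,1}
    (hpos : ∀ a : ℝ, a = 0 ∨ a = 1 →
      0 < μ {ω | Z ω = 1 ∧ A ω = a} ∧ 0 < μ {ω | Z ω = 1 ∧ Rdag ω = 1 ∧ A ω = a})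
    -- conditional mean equality implied by R† ⟂ (Z,Y) | A
    (hmean : ∀ a : ℝ, a = 0 ∨ a = 1 →
      cexp μ Y {ω | Z ω = 1 ∧ A ω = a ∧ Rdag ω = 1} = cexp μ Y {ω | Z ω = 1 ∧ A ω = a}) :
    cexp μ Y {ω | Z ω = 1 ∧ Rdag ω = 1} - cexp μ Y {ω | Z ω = 1} =
      (cexp μ Y {ω | Z ω = 1 ∧ A ω = 1} - cexp μ Y {ω | Z ω = 1 ∧ A ω = 0}) *
        (cexp μ A {ω | Z ω = 1 ∧ Rdag ω = 1} - cexp μ A {ω | Z ω = 1}) :=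
  stmt13_general μ Z A Rdag Y hAm hAbin hYint hmean
end

section
/- The bias of the complete-case estimand vanishes if either (i) α = 0, i.e., E(A|Z=1,R†=1) = E(A|Z=1,R†=0), or (ii) β = 0, i.e., E(Y|Z=1,A=1) − E(Y|Z=1,A=0) = Ψ^f. That is, under either condition, Ψ† = Ψ^f. -/
open MeasureTheory ProbabilityTheory
open scoped ENNReal

/-!
Write `p = E(A|Z=1)`, `q = E(A|Z=1,R†=1)`, `q' = E(A|Z=1,R†=0)`, `mₐ = E(Y|Z=1,A=a)` and
`c = E(Y|Z=0)`. Splitting on `A` gives `E(Y|Z=1) = p m₁ + (1-p) m₀`, and, since `R†` is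
independent of `Y` given `A` and `Z`, also `E(Y|Z=1,R†=1) = q m₁ + (1-q) m₀`. Hence
`Ψᶠ = m₁ - m₀ + (m₀ - c)/p` and `Ψ† = m₁ - m₀ + (m₀ - c)/q`. If `α = 0` then `p`, being a
mixture of `q = q'` and `q'`, equals `q`; if `β = 0` then `m₀ = c`. Either way `Ψ† = Ψᶠ`.
-/

lemma setOf_eq_zero_eq_compl {Ω : Type*} {g : Ω → ℝ} (hg : ∀ ω, g ω = 0 ∨ g ω = 1) :
    {ω | g ω = 0} = {ω | g ω = 1}ᶜ := by
  ext ω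
  rcases hg ω with h | h <;> simp [h]

lemma mixture_ratio_eq_of_or {p q m₁ m₀ c : ℝ} (hp : p ≠ 0) (hq : q ≠ 0)
    (h : p = q ∨ m₁ - m₀ = (p * m₁ + (1 - p) * m₀ - c) / p) :
    (q * m₁ + (1 - q) * m₀ - c) / q = (p * m₁ + (1 - p) * m₀ - c) / p := by
  rcases h with rfl | h
  · rfl
  have hm₀ : m₀ = c := by
    field_simp at h
    linarith
  subst hm₀
  field_simp
  ring

section

variable {Ω : Type*} [MeasurableSpace Ω] {μ : Measure Ω}

lemma measure_ne_zero_of_cexp_ne_zero {f : Ω → ℝ} {s : Set Ω} (h : cexp μ f s ≠ 0) :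
    μ s ≠ 0 := by
  intro hs
  simp [cexp, hs] at h

lemma measureReal_mul_cexp [IsFiniteMeasure μ] (f : Ω → ℝ) (s : Set Ω) :
    μ.real s * cexp μ f s = ∫ ω in s, f ω ∂μ := by
  rcases eq_or_ne (μ s) 0 with hs | hs
  · simp [setIntegral_measure_zero f hs, measureReal_def, hs]
  · exact mul_div_cancel₀ _ ((measureReal_eq_zero_iff).not.mpr hs)

lemma integrable_of_binary [IsFiniteMeasure μ] {g : Ω → ℝ} (hgm : Measurable g)
    (hg : ∀ ω, g ω = 0 ∨ g ω = 1) : Integrable g μ :=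
  .of_bound hgm.aestronglyMeasurable 1 <| .of_forall fun ω => by
    rcases hg ω with h | h <;> simp [h]

lemma cexp_of_binary {g : Ω → ℝ} (hgm : Measurable g) (hg : ∀ ω, g ω = 0 ∨ g ω = 1)
    (s : Set Ω) : cexp μ g s = μ.real (s ∩ {ω | g ω = 1}) / μ.real s := by
  have hg1 : MeasurableSet {ω | g ω = 1} := hgm (measurableSet_singleton 1)
  have hind : g = Set.indicator {ω | g ω = 1} 1 := by
    funext ω
    rcases hg ω with h | h <;> simp [h]
  calc cexp μ g s = (∫ ω in s, Set.indicator {ω | g ω = 1} 1 ω ∂μ) / μ.real s := by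
        rw [cexp, ← hind, measureReal_def]
    _ = μ.real (s ∩ {ω | g ω = 1}) / μ.real s := by
        rw [integral_indicator hg1, Pi.one_def, setIntegral_const, smul_eq_mul, mul_one,
          measureReal_restrict_apply hg1, Set.inter_comm]

/-- `h₁`, `h₀` say `mᵢ = E(f | s, g = i)` in a form that stays true when that event is null. -/
lemma cexp_eq_mixture [IsFiniteMeasure μ] {f g : Ω → ℝ} {s : Set Ω} {m₁ m₀ : ℝ}
    (hgm : Measurable g) (hg : ∀ ω, g ω = 0 ∨ g ω = 1) (hf : Integrable f μ) (hs : μ s ≠ 0)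
    (h₁ : ∫ ω in s ∩ {ω | g ω = 1}, f ω ∂μ = μ.real (s ∩ {ω | g ω = 1}) * m₁)
    (h₀ : ∫ ω in s ∩ {ω | g ω = 0}, f ω ∂μ = μ.real (s ∩ {ω | g ω = 0}) * m₀) :
    cexp μ f s = cexp μ g s * m₁ + (1 - cexp μ g s) * m₀ := by
  have hg1 : MeasurableSet {ω | g ω = 1} := hgm (measurableSet_singleton 1)
  rw [setOf_eq_zero_eq_compl hg, ← Set.sdiff_eq] at h₀
  have hint := integral_inter_add_sdiff hg1 (hf.integrableOn (s := s))
  have hmeas := measureReal_inter_add_sdiff (μ := μ) (s := s) hg1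
  have hs' : μ.real s ≠ 0 := (measureReal_eq_zero_iff).not.mpr hs
  rw [cexp_of_binary hgm hg, cexp, ← measureReal_def, ← hint, h₁, h₀, ← hmeas]
  rw [← hmeas] at hs'
  field_simp
  ring

/-- Under `P(r, u, Y ∈ B | t) = P(r | t) P(u, Y ∈ B | t)`, the law of `Y` on `r ∩ u ∩ t` is a
multiple of its law on `u ∩ t`; integrating the identity gives the claim. -/
lemma setIntegral_mul_measureReal_eq_of_factorization [IsFiniteMeasure μ] {Y : Ω → ℝ}
    (hYm : Measurable Y) {r u t : Set Ω}
    (hfac : ∀ B : Set ℝ, MeasurableSet B →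
      μ (r ∩ u ∩ {ω | Y ω ∈ B} ∩ t) * μ t = μ (r ∩ t) * μ (u ∩ {ω | Y ω ∈ B} ∩ t)) :
    (∫ ω in r ∩ u ∩ t, Y ω ∂μ) * μ.real t = μ.real (r ∩ t) * ∫ ω in u ∩ t, Y ω ∂μ := by
  have hlaw : μ t • (μ.restrict (r ∩ u ∩ t)).map Y = μ (r ∩ t) • (μ.restrict (u ∩ t)).map Y := by
    ext B hB
    have e₁ : Y ⁻¹' B ∩ (r ∩ u ∩ t) = r ∩ u ∩ {ω | Y ω ∈ B} ∩ t := by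
      ext ω; simp only [Set.mem_inter_iff, Set.mem_preimage, Set.mem_ofPred_eq]; tauto
    have e₂ : Y ⁻¹' B ∩ (u ∩ t) = u ∩ {ω | Y ω ∈ B} ∩ t := by
      ext ω; simp only [Set.mem_inter_iff, Set.mem_preimage, Set.mem_ofPred_eq]; tauto
    rw [Measure.smul_apply, Measure.smul_apply, Measure.map_apply hYm hB,
      Measure.map_apply hYm hB, Measure.restrict_apply (hYm hB),
      Measure.restrict_apply (hYm hB), e₁, e₂, smul_eq_mul, smul_eq_mul, mul_comm]
    exact hfac B hB
  have hmean := congrArg (fun ν : Measure ℝ => ∫ x, x ∂ν) hlaw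
  have hmap (ν : Measure Ω) : ∫ x, x ∂(ν.map Y) = ∫ ω, Y ω ∂ν :=
    integral_map hYm.aemeasurable aestronglyMeasurable_id
  simp only [integral_smul_measure, smul_eq_mul, hmap] at hmean
  rw [measureReal_def, measureReal_def]
  linarith

lemma setIntegral_eq_measureReal_mul_cexp_of_factorization [IsFiniteMeasure μ] {Y : Ω → ℝ}
    (hYm : Measurable Y) {r u t : Set Ω}
    (hfac : 0 < μ t → ∀ B : Set ℝ, MeasurableSet B →
      μ (r ∩ u ∩ {ω | Y ω ∈ B} ∩ t) * μ t = μ (r ∩ t) * μ (u ∩ {ω | Y ω ∈ B} ∩ t)) :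
    ∫ ω in u ∩ r ∩ t, Y ω ∂μ = μ.real (u ∩ r ∩ t) * cexp μ Y (u ∩ t) := by
  rw [Set.inter_comm u r]
  rcases eq_zero_or_pos (μ t) with ht | ht
  · have hnull : μ (r ∩ u ∩ t) = 0 := measure_mono_null Set.inter_subset_right ht
    simp [setIntegral_measure_zero Y hnull, measureReal_def, hnull]
  have hprob : μ.real (r ∩ u ∩ t) * μ.real t = μ.real (r ∩ t) * μ.real (u ∩ t) := by
    have h := hfac ht Set.univ MeasurableSet.univ
    simp only [Set.mem_univ, Set.ofPred_true, Set.inter_univ] at h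
    simp only [measureReal_def, ← ENNReal.toReal_mul, h]
  have ht' : μ.real t ≠ 0 := (measureReal_eq_zero_iff).not.mpr ht.ne'
  apply mul_right_cancel₀ ht'
  rw [setIntegral_mul_measureReal_eq_of_factorization hYm (hfac ht), ← measureReal_mul_cexp]
  linear_combination cexp μ Y (u ∩ t) * hprob.symm

end

theorem stmt15_general {Ω : Type*} [MeasurableSpace Ω] (μ : Measure Ω) [IsProbabilityMeasure μ]
    (Z A Rdag Y : Ω → ℝ)
    (hAm : Measurable A) (hRdagm : Measurable Rdag) (hYm : Measurable Y)
    (hAbin : ∀ ω, A ω = 0 ∨ A ω = 1)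
    (hRdagbin : ∀ ω, Rdag ω = 0 ∨ Rdag ω = 1)
    (hYint : Integrable Y μ)
    -- conditional independence R† ⟂ (Z, Y) | A, as a factorization given each {A = a}
    (hci : ∀ a : ℝ, 0 < μ {ω | A ω = a} →
      ∀ (r z : ℝ) (B : Set ℝ), MeasurableSet B →
        μ ({ω | Rdag ω = r} ∩ {ω | Z ω = z} ∩ {ω | Y ω ∈ B} ∩ {ω | A ω = a}) *
            μ {ω | A ω = a} =
          μ ({ω | Rdag ω = r} ∩ {ω | A ω = a}) *
            μ ({ω | Z ω = z} ∩ {ω | Y ω ∈ B} ∩ {ω | A ω = a}))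
    (hApos : 0 < cexp μ A {ω | Z ω = 1})
    (hApos' : 0 < cexp μ A {ω | Z ω = 1 ∧ Rdag ω = 1})
    -- either α = 0 or β = 0
    (hab : cexp μ A {ω | Z ω = 1 ∧ Rdag ω = 1} = cexp μ A {ω | Z ω = 1 ∧ Rdag ω = 0} ∨
      cexp μ Y {ω | Z ω = 1 ∧ A ω = 1} - cexp μ Y {ω | Z ω = 1 ∧ A ω = 0} =
        (cexp μ Y {ω | Z ω = 1} - cexp μ Y {ω | Z ω = 0}) / cexp μ A {ω | Z ω = 1}) :
    (cexp μ Y {ω | Z ω = 1 ∧ Rdag ω = 1} - cexp μ Y {ω | Z ω = 0}) /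
        cexp μ A {ω | Z ω = 1 ∧ Rdag ω = 1} =
      (cexp μ Y {ω | Z ω = 1} - cexp μ Y {ω | Z ω = 0}) / cexp μ A {ω | Z ω = 1} := by
  have hZ₁ : μ {ω | Z ω = 1} ≠ 0 := measure_ne_zero_of_cexp_ne_zero hApos.ne'
  have hZ₁R₁ : μ {ω | Z ω = 1 ∧ Rdag ω = 1} ≠ 0 := measure_ne_zero_of_cexp_ne_zero hApos'.ne'
  have hci' (a : ℝ) : ∫ ω in {ω | Z ω = 1 ∧ Rdag ω = 1} ∩ {ω | A ω = a}, Y ω ∂μ =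
      μ.real ({ω | Z ω = 1 ∧ Rdag ω = 1} ∩ {ω | A ω = a}) * cexp μ Y {ω | Z ω = 1 ∧ A ω = a} :=
    setIntegral_eq_measureReal_mul_cexp_of_factorization hYm fun ha => hci a ha 1 1
  have hY : cexp μ Y {ω | Z ω = 1} =
      cexp μ A {ω | Z ω = 1} * cexp μ Y {ω | Z ω = 1 ∧ A ω = 1} +
        (1 - cexp μ A {ω | Z ω = 1}) * cexp μ Y {ω | Z ω = 1 ∧ A ω = 0} :=
    cexp_eq_mixture hAm hAbin hYint hZ₁
      (measureReal_mul_cexp _ _).symm (measureReal_mul_cexp _ _).symm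
  have hYR : cexp μ Y {ω | Z ω = 1 ∧ Rdag ω = 1} =
      cexp μ A {ω | Z ω = 1 ∧ Rdag ω = 1} * cexp μ Y {ω | Z ω = 1 ∧ A ω = 1} +
        (1 - cexp μ A {ω | Z ω = 1 ∧ Rdag ω = 1}) * cexp μ Y {ω | Z ω = 1 ∧ A ω = 0} :=
    cexp_eq_mixture hAm hAbin hYint hZ₁R₁ (hci' 1) (hci' 0)
  have hA : cexp μ A {ω | Z ω = 1} =
      cexp μ Rdag {ω | Z ω = 1} * cexp μ A {ω | Z ω = 1 ∧ Rdag ω = 1} +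
        (1 - cexp μ Rdag {ω | Z ω = 1}) * cexp μ A {ω | Z ω = 1 ∧ Rdag ω = 0} :=
    cexp_eq_mixture hRdagm hRdagbin (integrable_of_binary hAm hAbin) hZ₁
      (measureReal_mul_cexp _ _).symm (measureReal_mul_cexp _ _).symm
  rw [hYR, hY]
  rw [hY] at hab
  refine mixture_ratio_eq_of_or hApos.ne' hApos'.ne' (hab.imp (fun hα => ?_) id)
  rw [hA, hα]
  ring

/-- The bias of the complete-case estimand vanishes if either (i) `α = 0`, i.e.
`E(A|Z=1,R†=1) = E(A|Z=1,R†=0)`, or (ii) `β = 0`, i.e.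
`E(Y|Z=1,A=1) − E(Y|Z=1,A=0) = Ψᶠ`.  Under either condition, `Ψ† = Ψᶠ`. -/
theorem stmt15 {Ω : Type*} [MeasurableSpace Ω] (μ : Measure Ω) [IsProbabilityMeasure μ]
    (Z A Rdag Y : Ω → ℝ)
    (hZm : Measurable Z) (hAm : Measurable A) (hRdagm : Measurable Rdag) (hYm : Measurable Y)
    (hZbin : ∀ ω, Z ω = 0 ∨ Z ω = 1)
    (hAbin : ∀ ω, A ω = 0 ∨ A ω = 1)
    (hRdagbin : ∀ ω, Rdag ω = 0 ∨ Rdag ω = 1)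
    (hYint : Integrable Y μ)
    -- one-sided noncompliance: {Z=0, A=1} is a null event
    (hos : μ {ω | Z ω = 0 ∧ A ω = 1} = 0)
    -- conditional independence R† ⟂ (Z, Y) | A, as a factorization given each {A = a}
    (hci : ∀ a : ℝ, 0 < μ {ω | A ω = a} →
      ∀ (r z : ℝ) (B : Set ℝ), MeasurableSet B →
        μ ({ω | Rdag ω = r} ∩ {ω | Z ω = z} ∩ {ω | Y ω ∈ B} ∩ {ω | A ω = a}) *
            μ {ω | A ω = a} =
          μ ({ω | Rdag ω = r} ∩ {ω | A ω = a}) *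
            μ ({ω | Z ω = z} ∩ {ω | Y ω ∈ B} ∩ {ω | A ω = a}))
    -- positivity of the conditioning events
    (h1 : 0 < μ {ω | Z ω = 1 ∧ Rdag ω = 1}) (h2 : 0 < μ {ω | Z ω = 1 ∧ Rdag ω = 0})
    (h3 : 0 < μ {ω | Z ω = 1 ∧ A ω = 1}) (h4 : 0 < μ {ω | Z ω = 1 ∧ A ω = 0})
    (h5 : 0 < μ {ω | Z ω = 0})
    (hApos : 0 < cexp μ A {ω | Z ω = 1})
    (hApos' : 0 < cexp μ A {ω | Z ω = 1 ∧ Rdag ω = 1})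
    -- either α = 0 or β = 0
    (hab : cexp μ A {ω | Z ω = 1 ∧ Rdag ω = 1} = cexp μ A {ω | Z ω = 1 ∧ Rdag ω = 0} ∨
      cexp μ Y {ω | Z ω = 1 ∧ A ω = 1} - cexp μ Y {ω | Z ω = 1 ∧ A ω = 0} =
        (cexp μ Y {ω | Z ω = 1} - cexp μ Y {ω | Z ω = 0}) / cexp μ A {ω | Z ω = 1}) :
    (cexp μ Y {ω | Z ω = 1 ∧ Rdag ω = 1} - cexp μ Y {ω | Z ω = 0}) /
        cexp μ A {ω | Z ω = 1 ∧ Rdag ω = 1} =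
      (cexp μ Y {ω | Z ω = 1} - cexp μ Y {ω | Z ω = 0}) / cexp μ A {ω | Z ω = 1} :=
  stmt15_general μ Z A Rdag Y hAm hRdagm hYm hAbin hRdagbin hYint hci hApos hApos' hab
end

section
/- Difference between efficiency bounds with and without one-sided noncompliance information: with R ⟂ (Z,A,Y), p = P(R=1) ∈ (0,1), and R† = R(1−A) + A, one has Var(D*) − Var(D_os) = odds(R=0) · E[ Var(D | A,Y) · 1{A=1} ] ≥ 0, where D* = (R/p)(D − E[D|A,Y]) + E[D|A,Y], D_os = (R†/E(R†|A))(D − E[D|A,Y]) + E[D|A,Y], and odds(R=0) = (1−p)/p. -/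
/-!
Write `ε = D - E[D | A,Y]`. Both scores are `w * ε + E[D | A,Y]`, with weights `R / p` and
`A + (1 - A) * R / p`; the latter is `R† / E(R† | A)` because `A` is binary. The weights agree
on `{A = 0}`. Every other factor is a function of `(Z,A,Y)`, which is independent of `R`, so
`E[(a R - b) X] = (a p - b) E[X]` for such `X`. Hence the two scores have the same mean, and,
using `R² = R` and `A² = A`, the difference of their second moments is
`E[(R / p² - 1) A ε²] + 2 E[(R / p - 1) A ε E[D | A,Y]] = ((1 - p) / p) E[A ε²]`. Finally
`E[A ε²] = ∫_{A = 1} Var(D | A,Y)` since `{A = 1}` is `σ(A,Y)`-measurable.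
-/

open MeasureTheory ProbabilityTheory
open scoped ENNReal

/-- The conditional variance `Var(D | A,Y) = E[D² | A,Y] − E[D | A,Y]²`. -/
noncomputable def condVarAY {Ω : Type*} [MeasurableSpace Ω] (μ : MeasureTheory.Measure Ω)
    (A Y D : Ω → ℝ) : Ω → ℝ :=
  fun ω => (μ[fun ω' => D ω' ^ 2 | sigmaAY A Y]) ω - ((μ[D | sigmaAY A Y]) ω) ^ 2

section Independence

variable {Ω : Type*} [MeasurableSpace Ω] {μ : Measure Ω} {R X : Ω → ℝ}

lemma ProbabilityTheory.Indep.indepFun_of_measurable {G : MeasurableSpace Ω}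
    (h : Indep (MeasurableSpace.comap R inferInstance) G μ) (hX : Measurable[G] X) :
    IndepFun R X μ := by
  rw [IndepFun_iff_Indep]
  exact indep_of_indep_of_le_right h hX.comap_le

variable [IsProbabilityMeasure μ] (a b : ℝ)

lemma ProbabilityTheory.IndepFun.integrable_affine_mul (h : IndepFun R X μ)
    (hR : Integrable R μ) (hX : Integrable X μ) :
    Integrable (fun ω => (a * R ω - b) * X ω) μ :=
  (h.comp (φ := fun r => a * r - b) (by fun_prop) measurable_id).integrable_mul
    ((hR.const_mul a).sub (integrable_const b)) hX

lemma ProbabilityTheory.IndepFun.integral_affine_mul (h : IndepFun R X μ)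
    (hR : Integrable R μ) (hX : AEStronglyMeasurable X μ) :
    ∫ ω, (a * R ω - b) * X ω ∂μ = (a * ∫ ω, R ω ∂μ - b) * ∫ ω, X ω ∂μ := by
  have h' := (h.comp (φ := fun r => a * r - b) (by fun_prop) measurable_id)
    |>.integral_mul_eq_mul_integral
      ((hR.const_mul a).sub (integrable_const b)).aestronglyMeasurable hX
  simp only [Function.comp_def, Pi.mul_apply, id] at h'
  rw [h', integral_sub (hR.const_mul a) (integrable_const b), integral_const_mul]
  simp

end Independence

lemma eq_indicator_of_binary {Ω : Type*} {A : Ω → ℝ} (hA : ∀ ω, A ω = 0 ∨ A ω = 1) :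
    A = {ω | A ω = 1}.indicator 1 := by
  ext ω
  rcases hA ω with h | h <;> simp [h]

section Binary

variable {Ω : Type*} [MeasurableSpace Ω] {μ : Measure Ω} {A : Ω → ℝ}

lemma memLp_top_of_binary (hAm : Measurable A) (hA : ∀ ω, A ω = 0 ∨ A ω = 1) :
    MemLp A ∞ μ :=
  memLp_top_of_bound hAm.aestronglyMeasurable 1
    (ae_of_all _ fun ω => by rcases hA ω with h | h <;> simp [h])

lemma integral_eq_measureReal_of_binary (hAm : Measurable A) (hA : ∀ ω, A ω = 0 ∨ A ω = 1) :
    ∫ ω, A ω ∂μ = μ.real {ω | A ω = 1} := by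
  conv_lhs => rw [eq_indicator_of_binary hA]
  exact integral_indicator_one (hAm (measurableSet_singleton 1))

lemma setIntegral_eq_integral_mul_of_binary (hAm : Measurable A) (hA : ∀ ω, A ω = 0 ∨ A ω = 1)
    (f : Ω → ℝ) : ∫ ω in {ω | A ω = 1}, f ω ∂μ = ∫ ω, A ω * f ω ∂μ := by
  rw [← integral_indicator (measurableSet_eq_fun hAm measurable_const)]
  congr with ω
  rcases hA ω with h | h <;> simp [h]

end Binary

lemma ProbabilityTheory.variance_sub_variance_of_integral_eq {Ω : Type*} [MeasurableSpace Ω]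
    {μ : Measure Ω} [IsProbabilityMeasure μ] {X Y : Ω → ℝ} (hX : MemLp X 2 μ) (hY : MemLp Y 2 μ)
    (h : ∫ ω, X ω ∂μ = ∫ ω, Y ω ∂μ) :
    variance X μ - variance Y μ = ∫ ω, (X ω ^ 2 - Y ω ^ 2) ∂μ := by
  rw [variance_eq_sub hX, variance_eq_sub hY, integral_sub hX.integrable_sq hY.integrable_sq]
  simp only [Pi.pow_apply, h]
  ring

lemma sigmaAY_le_comap {Ω : Type*} (Z A Y : Ω → ℝ) :
    sigmaAY A Y ≤ MeasurableSpace.comap (fun ω => (Z ω, A ω, Y ω)) inferInstance := by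
  rintro _ ⟨t, ht, rfl⟩
  exact ⟨Prod.snd ⁻¹' t, measurable_snd ht, rfl⟩

section CondVar

variable {Ω : Type*} [MeasurableSpace Ω] {A Y : Ω → ℝ}

lemma sigmaAY_le (hAm : Measurable A) (hYm : Measurable Y) : sigmaAY A Y ≤ ‹MeasurableSpace Ω› :=
  (hAm.prodMk hYm).comap_le

lemma setIntegral_condVarAY {μ : Measure Ω} [IsFiniteMeasure μ] {D : Ω → ℝ} {s : Set Ω}
    (hAm : Measurable A) (hYm : Measurable Y) (hD : MemLp D 2 μ)
    (hs : MeasurableSet[sigmaAY A Y] s) :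
    ∫ ω in s, condVarAY μ A Y D ω ∂μ = ∫ ω in s, (D ω - (μ[D | sigmaAY A Y]) ω) ^ 2 ∂μ := by
  have hle := sigmaAY_le hAm hYm
  rw [← setIntegral_condVar (hm := hle) ((hD.sub (hD.condExp one_le_two)).integrable_sq) hs]
  refine setIntegral_congr_ae (hle s hs) ?_
  filter_upwards [condVar_ae_eq_condExp_sq_sub_sq_condExp hle hD] with ω hω _
  exact hω.symm

end CondVar

lemma oneSided_weight_eq {a : ℝ} (ha : a = 0 ∨ a = 1) (r p : ℝ) :
    (r * (1 - a) + a) / (a + (1 - a) * p) = a + (1 - a) * (r / p) := by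
  rcases ha with rfl | rfl <;> simp

lemma ipw_sq_sub_oneSided_sq {a r : ℝ} (ha : a = 0 ∨ a = 1) (hr : r = 0 ∨ r = 1) (p e m : ℝ) :
    (r / p * e + m) ^ 2 - ((a + (1 - a) * (r / p)) * e + m) ^ 2 =
      ((p ^ 2)⁻¹ * r - 1) * (a * e ^ 2) + (2 * p⁻¹ * r - 2) * (a * e * m) := by
  rcases ha with rfl | rfl <;> rcases hr with rfl | rfl <;> ring

section OneSided

variable {Ω : Type*} {G : MeasurableSpace Ω} [mΩ : MeasurableSpace Ω] {μ : Measure Ω}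
  [IsProbabilityMeasure μ] {R A ε m : Ω → ℝ} {p : ℝ}

theorem variance_ipw_sub_variance_oneSided (hG : G ≤ mΩ) (hRm : Measurable R)
    (hRbin : ∀ ω, R ω = 0 ∨ R ω = 1) (hAG : Measurable[G] A) (hAbin : ∀ ω, A ω = 0 ∨ A ω = 1)
    (hεG : Measurable[G] ε) (hmG : Measurable[G] m) (hε : MemLp ε 2 μ) (hm : MemLp m 2 μ)
    (hindep : Indep (MeasurableSpace.comap R inferInstance) G μ)
    (hRint : ∫ ω, R ω ∂μ = p) (hp : p ≠ 0) :
    variance (fun ω => R ω / p * ε ω + m ω) μ -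
        variance (fun ω => (A ω + (1 - A ω) * (R ω / p)) * ε ω + m ω) μ =
      (1 - p) / p * ∫ ω, A ω * ε ω ^ 2 ∂μ := by
  have hRinf : MemLp R ∞ μ := memLp_top_of_binary hRm hRbin
  have hAinf : MemLp A ∞ μ := memLp_top_of_binary (hAG.mono hG le_rfl) hAbin
  have hR : Integrable R μ := hRinf.integrable le_top
  have hAε : MemLp (fun ω => A ω * ε ω) 2 μ := hε.mul' hAinf
  have hAε2 : Integrable (fun ω => A ω * ε ω ^ 2) μ := hε.integrable_sq.smul_of_top_right hAinf
  have hAεm : Integrable (fun ω => A ω * ε ω * m ω) μ := hAε.integrable_mul hm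
  have hRp : MemLp (fun ω => R ω / p) ∞ μ := by
    simpa only [div_eq_mul_inv] using hRinf.mul_const p⁻¹
  have hipw : MemLp (fun ω => R ω / p * ε ω + m ω) 2 μ := (hε.mul' hRp).add hm
  have hos : MemLp (fun ω => (A ω + (1 - A ω) * (R ω / p)) * ε ω + m ω) 2 μ :=
    (hε.mul' (hAinf.add (hRp.mul' ((memLp_top_const 1).sub hAinf)))).add hm
  have hind : ∀ X, Measurable[G] X → IndepFun R X μ := fun _ => hindep.indepFun_of_measurable
  have hind₀ := hind (fun ω => A ω * ε ω) (hAG.mul hεG)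
  have hind₁ := hind (fun ω => A ω * ε ω * m ω) ((hAG.mul hεG).mul hmG)
  have hind₂ := hind (fun ω => A ω * ε ω ^ 2) (hAG.mul (hεG.pow_const 2))
  have hmean : ∫ ω, R ω / p * ε ω + m ω ∂μ =
      ∫ ω, (A ω + (1 - A ω) * (R ω / p)) * ε ω + m ω ∂μ := by
    rw [← sub_eq_zero, ← integral_sub (hipw.integrable one_le_two) (hos.integrable one_le_two)]
    have hsub : ∀ ω, R ω / p * ε ω + m ω - ((A ω + (1 - A ω) * (R ω / p)) * ε ω + m ω) =
        (p⁻¹ * R ω - 1) * (A ω * ε ω) := fun ω => by ring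
    simp_rw [hsub]
    rw [hind₀.integral_affine_mul _ _ hR hAε.aestronglyMeasurable, hRint]
    field_simp
    ring
  rw [variance_sub_variance_of_integral_eq hipw hos hmean]
  simp_rw [ipw_sq_sub_oneSided_sq (hAbin _) (hRbin _)]
  rw [integral_add (hind₂.integrable_affine_mul _ _ hR hAε2)
      (hind₁.integrable_affine_mul _ _ hR hAεm),
    hind₂.integral_affine_mul _ _ hR hAε2.aestronglyMeasurable,
    hind₁.integral_affine_mul _ _ hR hAεm.aestronglyMeasurable, hRint]
  field_simp
  ring

end OneSided

theorem stmt17_general {Ω : Type*} [MeasurableSpace Ω] (μ : Measure Ω) [IsProbabilityMeasure μ]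
    (Z A R Y D : Ω → ℝ)
    (hZm : Measurable Z) (hAm : Measurable A) (hRm : Measurable R) (hYm : Measurable Y)
    (hAbin : ∀ ω, A ω = 0 ∨ A ω = 1)
    (hRbin : ∀ ω, R ω = 0 ∨ R ω = 1)
    -- D is a measurable function of (Z, A, Y)
    (hDm : Measurable[MeasurableSpace.comap (fun ω => (Z ω, A ω, Y ω)) inferInstance] D)
    (hD2 : MemLp D 2 μ)
    -- MCAR: R independent of (Z, A, Y)
    (hindep : IndepFun R (fun ω => (Z ω, A ω, Y ω)) μ)
    (p : ℝ) (hp : p = (μ {ω | R ω = 1}).toReal) (hppos : 0 < p) (hplt : p < 1)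
    (Rdag : Ω → ℝ) (hRdag : Rdag = fun ω => R ω * (1 - A ω) + A ω)
    (Dstar : Ω → ℝ)
    (hDstar : Dstar = fun ω =>
      (R ω / p) * (D ω - (μ[D | sigmaAY A Y]) ω) + (μ[D | sigmaAY A Y]) ω)
    (Dos : Ω → ℝ)
    (hDos : Dos = fun ω =>
      (Rdag ω / (A ω + (1 - A ω) * p)) * (D ω - (μ[D | sigmaAY A Y]) ω) +
        (μ[D | sigmaAY A Y]) ω) :
    variance Dstar μ - variance Dos μ =
      ((1 - p) / p) * ∫ ω in {ω | A ω = 1}, condVarAY μ A Y D ω ∂μ ∧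
    0 ≤ variance Dstar μ - variance Dos μ := by
  subst hRdag hDstar hDos
  set m := μ[D | sigmaAY A Y]
  have hmG := (stronglyMeasurable_condExp (f := D) (μ := μ)).measurable.mono
    (sigmaAY_le_comap Z A Y) le_rfl
  have hA1 : MeasurableSet[sigmaAY A Y] {ω | A ω = 1} :=
    measurableSet_eq_fun (measurable_fst.comp (comap_measurable _)) measurable_const
  have hRint : ∫ ω, R ω ∂μ = p := by
    rw [integral_eq_measureReal_of_binary hRm hRbin, hp, measureReal_def]
  have hDos : (fun ω => (R ω * (1 - A ω) + A ω) / (A ω + (1 - A ω) * p) * (D ω - m ω) + m ω) =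
      fun ω => (A ω + (1 - A ω) * (R ω / p)) * (D ω - m ω) + m ω := by
    simp_rw [oneSided_weight_eq (hAbin _)]
  have hvar := variance_ipw_sub_variance_oneSided (A := A) (ε := fun ω => D ω - m ω)
    (hZm.prodMk (hAm.prodMk hYm)).comap_le hRm hRbin
    ((measurable_fst.comp measurable_snd).comp (comap_measurable _)) hAbin (hDm.sub hmG) hmG
    (hD2.sub (hD2.condExp one_le_two)) (hD2.condExp one_le_two)
    ((IndepFun_iff_Indep _ _ _).1 hindep) hRint hppos.ne'
  rw [hDos, hvar, setIntegral_condVarAY hAm hYm hD2 hA1,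
    setIntegral_eq_integral_mul_of_binary hAm hAbin]
  refine ⟨rfl, mul_nonneg (div_nonneg (by linarith) hppos.le)
    (integral_nonneg fun ω => mul_nonneg ?_ (sq_nonneg _))⟩
  rcases hAbin ω with h | h <;> simp [h]

/-- Difference between efficiency bounds with and without one-sided noncompliance
information: with `R ⟂ (Z,A,Y)`, `p = P(R=1) ∈ (0,1)`, `R† = R(1−A) + A`
(so that `E(R†|A) = A + (1−A)p`), one has
`Var(D*) − Var(D_os) = odds(R=0)·E[Var(D|A,Y)·1{A=1}] ≥ 0`, where
`D* = (R/p)(D − E[D|A,Y]) + E[D|A,Y]`,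
`D_os = (R†/E(R†|A))(D − E[D|A,Y]) + E[D|A,Y]`, and `odds(R=0) = (1−p)/p`. -/
theorem stmt17 {Ω : Type*} [MeasurableSpace Ω] (μ : Measure Ω) [IsProbabilityMeasure μ]
    (Z A R Y D : Ω → ℝ)
    (hZm : Measurable Z) (hAm : Measurable A) (hRm : Measurable R) (hYm : Measurable Y)
    (hZbin : ∀ ω, Z ω = 0 ∨ Z ω = 1)
    (hAbin : ∀ ω, A ω = 0 ∨ A ω = 1)
    (hRbin : ∀ ω, R ω = 0 ∨ R ω = 1)
    -- D is a measurable function of (Z, A, Y)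
    (hDm : Measurable[MeasurableSpace.comap (fun ω => (Z ω, A ω, Y ω)) inferInstance] D)
    (hD2 : MemLp D 2 μ) (hDmean : ∫ ω, D ω ∂μ = 0)
    -- MCAR: R independent of (Z, A, Y)
    (hindep : IndepFun R (fun ω => (Z ω, A ω, Y ω)) μ)
    (p : ℝ) (hp : p = (μ {ω | R ω = 1}).toReal) (hppos : 0 < p) (hplt : p < 1)
    (Rdag : Ω → ℝ) (hRdag : Rdag = fun ω => R ω * (1 - A ω) + A ω)
    (Dstar : Ω → ℝ)
    (hDstar : Dstar = fun ω =>
      (R ω / p) * (D ω - (μ[D | sigmaAY A Y]) ω) + (μ[D | sigmaAY A Y]) ω)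
    (Dos : Ω → ℝ)
    (hDos : Dos = fun ω =>
      (Rdag ω / (A ω + (1 - A ω) * p)) * (D ω - (μ[D | sigmaAY A Y]) ω) +
        (μ[D | sigmaAY A Y]) ω) :
    variance Dstar μ - variance Dos μ =
      ((1 - p) / p) * ∫ ω in {ω | A ω = 1}, condVarAY μ A Y D ω ∂μ ∧
    0 ≤ variance Dstar μ - variance Dos μ :=
  stmt17_general μ Z A R Y D hZm hAm hRm hYm hAbin hRbin hDm hD2 hindep p hp hppos hplt Rdag hRdag
    Dstar hDstar Dos hDos
end
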